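/- arXiv:2410.24089 — 2 statements merged into one kernel-verified Lean document; each statement's English description precedes it below -/
import Mathlib

section
/- Let P ∈ ℝ^{m×S} be a row-stochastic matrix (every column has a positive entry) where each row has at most U nonzero entries. If P = Φᵀ M with Φ ∈ ℝ^{d×m} and M ∈ ℝ^{d×S}, then d ≥ ⌊S/U⌋. -/
/-!
Every row of `P = Φᵀ M` lies in the row space of `M`, so `rank P ≤ d`. Choose a basis of the row
space of `P` among its rows. Each column of `P` has a nonzero entry in some row, and that row is a
combination of the basis rows, so some basis row is nonzero in that column too. Hence the supports
of the `rank P` basis rows, each of size at most `U`, cover all `S` columns: `S ≤ rank P · U ≤ d U`.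
-/

open Matrix Finset

theorem exists_mem_apply_ne_zero_of_mem_span {R M κ : Type*} [Semiring R] [AddCommMonoid M]
    [Module R M] {s : Set (κ → M)} {v : κ → M} (hv : v ∈ Submodule.span R s) {j : κ}
    (hj : v j ≠ 0) : ∃ w ∈ s, w j ≠ 0 := by
  by_contra! h
  have hker : Submodule.span R s ≤ LinearMap.ker (LinearMap.proj (R := R) (φ := fun _ => M) j) :=
    Submodule.span_le.2 h
  exact hj (hker hv)

theorem card_le_card_mul_of_supports_cover {κ M : Type*} [Fintype κ] [Zero M] [DecidableEq M]
    (s : Finset (κ → M)) (U : ℕ) (hcover : ∀ j, ∃ w ∈ s, w j ≠ 0)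
    (hU : ∀ w ∈ s, #{j | w j ≠ 0} ≤ U) : Fintype.card κ ≤ #s * U := by
  classical
  calc Fintype.card κ
      ≤ #(s.biUnion fun w => {j | w j ≠ 0}) := by
        rw [← card_univ]
        exact card_le_card fun j _ => by simpa using hcover j
    _ ≤ ∑ w ∈ s, #{j | w j ≠ 0} := card_biUnion_le
    _ ≤ #s * U := by simpa using sum_le_sum hU

theorem Matrix.card_le_rank_mul {K ι κ : Type*} [Field K] [DecidableEq K] [Fintype ι]
    [Fintype κ] (A : Matrix ι κ K) (U : ℕ) (hcol : ∀ j, ∃ i, A i j ≠ 0)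
    (hU : ∀ i, #{j | A i j ≠ 0} ≤ U) : Fintype.card κ ≤ A.rank * U := by
  obtain ⟨t, hts, hspan, hli⟩ := exists_linearIndependent K (Set.range A.row)
  lift t to Finset (κ → K) using (Set.finite_range _).subset hts
  have hrank : A.rank = #t := by
    rw [rank_eq_finrank_span_row, ← hspan, finrank_span_finset_eq_card hli]
  rw [hrank]
  refine card_le_card_mul_of_supports_cover t U (fun j => ?_) fun w hw => ?_
  · obtain ⟨i, hi⟩ := hcol j
    have hrow : A i ∈ Submodule.span K (t : Set (κ → K)) :=
      hspan ▸ Submodule.subset_span ⟨i, rfl⟩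
    simpa using exists_mem_apply_ne_zero_of_mem_span hrow hi
  · obtain ⟨i, rfl⟩ := hts hw
    exact hU i

theorem stmt1_general (m S U d : ℕ) (P : Matrix (Fin m) (Fin S) ℝ)
    (Φ : Matrix (Fin d) (Fin m) ℝ) (M : Matrix (Fin d) (Fin S) ℝ)
    (hcol : ∀ j, ∃ i, 0 < P i j)
    (hU : ∀ i, (Finset.univ.filter (fun j => P i j ≠ 0)).card ≤ U)
    (hfac : P = Φ.transpose * M) :
    S / U ≤ d := by
  have hrank : P.rank ≤ d := hfac ▸ (Φᵀ.rank_mul_le_left M).trans Φᵀ.rank_le_width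
  have hcol' : ∀ j, ∃ i, P i j ≠ 0 := fun j => (hcol j).imp fun _ h => h.ne'
  refine Nat.div_le_of_le_mul ?_
  calc S ≤ P.rank * U := by simpa using P.card_le_rank_mul U hcol' hU
    _ ≤ d * U := Nat.mul_le_mul_right U hrank
    _ = U * d := mul_comm d U

/-- If a row-stochastic matrix `P ∈ ℝ^{m×S}` (every column has a positive entry,
each row at most `U` nonzero entries) factors as `P = Φᵀ M` with `Φ ∈ ℝ^{d×m}`,
`M ∈ ℝ^{d×S}`, then `d ≥ ⌊S/U⌋`. -/
theorem stmt1 (m S U d : ℕ) (P : Matrix (Fin m) (Fin S) ℝ)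
    (Φ : Matrix (Fin d) (Fin m) ℝ) (M : Matrix (Fin d) (Fin S) ℝ)
    (hnn : ∀ i j, 0 ≤ P i j)
    (hrow : ∀ i, ∑ j, P i j = 1)
    (hcol : ∀ j, ∃ i, 0 < P i j)
    (hU : ∀ i, (Finset.univ.filter (fun j => P i j ≠ 0)).card ≤ U)
    (hfac : P = Φ.transpose * M) :
    S / U ≤ d :=
  stmt1_general m S U d P Φ M hcol hU hfac
end

section
/- Combining the two previous facts: for φ_1,…,φ_K ∈ ℝ^d with ‖φ_k‖₂ ≤ C and Λ_k = λI + Σ_{j<k} φ_j φ_jᵀ (λ > 0), Σ_{k=1}^K min{1, ‖φ_k‖²_{Λ_k^{-1}}} ≤ 2d ln((C²K + λ)/λ). -/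
/-!
Adding `φ_k φ_kᵀ` multiplies `det Λ_k` by `1 + ‖φ_k‖²_{Λ_k⁻¹}` (matrix determinant lemma), so the
potentials telescope: `∑_k log (1 + ‖φ_k‖²_{Λ_k⁻¹}) = log (det Λ_K / λ^d)`. By AM-GM on the
eigenvalues, `det Λ_K ≤ (tr Λ_K / d)^d ≤ (λ + C²K)^d`, and `min 1 x ≤ 2 log (1 + x)` for `x ≥ 0`.
-/
open Matrix Finset

theorem Real.min_one_le_two_mul_log_one_add {x : ℝ} (hx : 0 ≤ x) :
    min 1 x ≤ 2 * Real.log (1 + x) := by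
  have hlog := Real.le_log_one_add_of_nonneg hx
  have : min 1 x ≤ 4 * x / (x + 2) := by
    rw [le_div_iff₀ (by linarith)]
    rcases le_total x 1 with h | h
    · rw [min_eq_right h]; nlinarith
    · rw [min_eq_left h]; linarith
  linarith [show 4 * x / (x + 2) = 2 * (2 * x / (x + 2)) by ring]

theorem Real.prod_le_pow_card_of_sum_le {ι : Type*} (s : Finset ι) {z : ι → ℝ} {c : ℝ}
    (hz : ∀ i ∈ s, 0 ≤ z i) (h : ∑ i ∈ s, z i ≤ #s * c) : ∏ i ∈ s, z i ≤ c ^ #s := by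
  rcases s.eq_empty_or_nonempty with rfl | hs
  · simp
  have hcard : (0 : ℝ) < #s := by exact_mod_cast hs.card_pos
  have hmean := Real.geom_mean_le_arith_mean s (fun _ ↦ 1) z (fun _ _ ↦ zero_le_one)
    (by simpa using hcard) hz
  simp only [Real.rpow_one, sum_const, nsmul_eq_mul, mul_one, one_mul] at hmean
  have hroot : (∏ i ∈ s, z i) ^ (#s : ℝ)⁻¹ ≤ c :=
    hmean.trans ((div_le_iff₀' hcard).mpr h)
  calc ∏ i ∈ s, z i = ((∏ i ∈ s, z i) ^ (#s : ℝ)⁻¹) ^ #s :=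
        (Real.rpow_inv_natCast_pow (prod_nonneg hz) hs.card_pos.ne').symm
    _ ≤ c ^ #s := pow_le_pow_left₀ (Real.rpow_nonneg (prod_nonneg hz) _) hroot _

namespace Matrix

theorem posSemidef_sum_vecMulVec_self {n ι : Type*} [Finite n] (s : Finset ι) (v : ι → n → ℝ) :
    (∑ j ∈ s, vecMulVec (v j) (v j)).PosSemidef :=
  posSemidef_sum s fun j _ ↦ posSemidef_vecMulVec_self_star (v j)

variable {n : Type*} [Fintype n] [DecidableEq n]

theorem det_add_vecMulVec {α : Type*} [CommRing α] {A : Matrix n n α} (hA : IsUnit A.det)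
    (u v : n → α) : (A + vecMulVec u v).det = A.det * (1 + v ⬝ᵥ (A⁻¹ *ᵥ u)) := by
  have : A + vecMulVec u v = A * (1 + replicateCol Unit (A⁻¹ *ᵥ u) * replicateRow Unit v) := by
    rw [mul_add, mul_one, replicateCol_mulVec, ← Matrix.mul_assoc, ← Matrix.mul_assoc,
      mul_nonsing_inv _ hA, Matrix.one_mul, vecMulVec_eq Unit]
  rw [this, det_mul, det_one_add_replicateCol_mul_replicateRow]

theorem PosSemidef.det_le_pow_of_trace_le {A : Matrix n n ℝ} (hA : A.PosSemidef) {c : ℝ}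
    (h : A.trace ≤ Fintype.card n * c) : A.det ≤ c ^ Fintype.card n := by
  rw [hA.isHermitian.det_eq_prod_eigenvalues]
  rw [hA.isHermitian.trace_eq_sum_eigenvalues] at h
  exact Real.prod_le_pow_card_of_sum_le univ (fun i _ ↦ hA.eigenvalues_nonneg i) (by simpa using h)

theorem det_smul_one_add_le {S : Matrix n n ℝ} (hS : S.PosSemidef) {c : ℝ} (hc : 0 ≤ c) :
    (c • (1 : Matrix n n ℝ) + S).det ≤ (c + S.trace) ^ Fintype.card n := by
  rcases isEmpty_or_nonempty n with hn | hn
  · simp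
  have hpsd : (c • (1 : Matrix n n ℝ) + S).PosSemidef :=
    (PosSemidef.one.smul hc).add hS
  refine hpsd.det_le_pow_of_trace_le ?_
  have hcard : (1 : ℝ) ≤ Fintype.card n := by exact_mod_cast Fintype.card_pos
  rw [trace_add, trace_smul, trace_one, smul_eq_mul]
  nlinarith [hS.trace_nonneg]

end Matrix

section RegularizedGram

variable {n : Type*} [DecidableEq n]

def regularizedGram (lam : ℝ) (φ : ℕ → n → ℝ) (k : ℕ) : Matrix n n ℝ :=
  lam • 1 + ∑ j ∈ range k, vecMulVec (φ j) (φ j)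

variable {lam : ℝ} (φ : ℕ → n → ℝ)

theorem regularizedGram_succ (k : ℕ) :
    regularizedGram lam φ (k + 1) = regularizedGram lam φ k + vecMulVec (φ k) (φ k) := by
  rw [regularizedGram, regularizedGram, sum_range_succ, add_assoc]

variable [Fintype n]

theorem regularizedGram_posDef (hlam : 0 < lam) (k : ℕ) : (regularizedGram lam φ k).PosDef :=
  (PosDef.one.smul hlam).add_posSemidef (posSemidef_sum_vecMulVec_self _ φ)

theorem det_regularizedGram (hlam : 0 < lam) (k : ℕ) :
    (regularizedGram lam φ k).det =
      lam ^ Fintype.card n * ∏ j ∈ range k, (1 + φ j ⬝ᵥ ((regularizedGram lam φ j)⁻¹ *ᵥ φ j)) := by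
  induction k with
  | zero => simp [regularizedGram]
  | succ k ih =>
    rw [regularizedGram_succ, det_add_vecMulVec (regularizedGram_posDef φ hlam k).det_pos.ne'.isUnit,
      ih, prod_range_succ, mul_assoc]

theorem det_regularizedGram_le (hlam : 0 ≤ lam) {C : ℝ} (hφ : ∀ j, φ j ⬝ᵥ φ j ≤ C ^ 2)
    (k : ℕ) : (regularizedGram lam φ k).det ≤ (C ^ 2 * k + lam) ^ Fintype.card n := by
  have hS := posSemidef_sum_vecMulVec_self (range k) φ
  have htrace : (∑ j ∈ range k, vecMulVec (φ j) (φ j)).trace ≤ C ^ 2 * k := by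
    rw [trace_sum]
    simpa [trace_vecMulVec, mul_comm] using sum_le_sum fun j (_ : j ∈ range k) ↦ hφ j
  calc (regularizedGram lam φ k).det
      ≤ (lam + (∑ j ∈ range k, vecMulVec (φ j) (φ j)).trace) ^ Fintype.card n :=
        det_smul_one_add_le hS hlam
    _ ≤ (C ^ 2 * k + lam) ^ Fintype.card n :=
        pow_le_pow_left₀ (by linarith [hS.trace_nonneg]) (by linarith) _

theorem sum_min_one_dotProduct_inv_regularizedGram_le (hlam : 0 < lam) {C : ℝ} (hφ : ∀ j, φ j ⬝ᵥ φ j ≤ C ^ 2)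
    (K : ℕ) :
    ∑ k ∈ range K, min 1 (φ k ⬝ᵥ ((regularizedGram lam φ k)⁻¹ *ᵥ φ k)) ≤
      2 * Fintype.card n * Real.log ((C ^ 2 * K + lam) / lam) := by
  set x : ℕ → ℝ := fun k ↦ φ k ⬝ᵥ ((regularizedGram lam φ k)⁻¹ *ᵥ φ k)
  have hx : ∀ k, 0 ≤ x k := fun k ↦ by
    simpa using (regularizedGram_posDef φ hlam k).inv.posSemidef.dotProduct_mulVec_nonneg (φ k)
  have hprod : ∏ k ∈ range K, (1 + x k) ≤ ((C ^ 2 * K + lam) / lam) ^ Fintype.card n := by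
    rw [div_pow, le_div_iff₀' (by positivity), ← det_regularizedGram φ hlam]
    exact det_regularizedGram_le φ hlam.le hφ K
  calc ∑ k ∈ range K, min 1 (x k)
      ≤ ∑ k ∈ range K, 2 * Real.log (1 + x k) :=
        sum_le_sum fun k _ ↦ Real.min_one_le_two_mul_log_one_add (hx k)
    _ = 2 * Real.log (∏ k ∈ range K, (1 + x k)) := by
        rw [Real.log_prod fun k _ ↦ by linarith [hx k], mul_sum]
    _ ≤ 2 * Real.log (((C ^ 2 * K + lam) / lam) ^ Fintype.card n) := by
        gcongr
        exact prod_pos fun k _ ↦ by linarith [hx k]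
    _ = 2 * Fintype.card n * Real.log ((C ^ 2 * K + lam) / lam) := by
        rw [Real.log_pow, mul_assoc]

end RegularizedGram

theorem stmt6_general (d K : ℕ) (lam C : ℝ) (hlam : 0 < lam)
    (φ : ℕ → Fin d → ℝ)
    (hφ : ∀ k, Real.sqrt (∑ i, (φ k i) ^ 2) ≤ C)
    (Λ : ℕ → Matrix (Fin d) (Fin d) ℝ)
    (hΛ : ∀ k, Λ k = lam • (1 : Matrix (Fin d) (Fin d) ℝ) +
        ∑ j ∈ Finset.range k, Matrix.vecMulVec (φ j) (φ j)) :
    ∑ k ∈ Finset.range K, min 1 (φ k ⬝ᵥ ((Λ k)⁻¹ *ᵥ φ k)) ≤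
      2 * d * Real.log ((C ^ 2 * K + lam) / lam) := by
  obtain rfl : Λ = regularizedGram lam φ := funext hΛ
  have hφ' : ∀ k, φ k ⬝ᵥ φ k ≤ C ^ 2 := fun k ↦ by
    simpa [dotProduct, sq] using (Real.sqrt_le_iff.mp (hφ k)).2
  simpa using sum_min_one_dotProduct_inv_regularizedGram_le φ hlam hφ' K

/-- Elliptical potential with determinant-trace bound:
`Σ_{k<K} min{1, ‖φₖ‖²_{Λₖ⁻¹}} ≤ 2d ln((C²K + λ)/λ)`. -/
theorem stmt6 (d K : ℕ) (lam C : ℝ) (hlam : 0 < lam) (hC : 0 ≤ C)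
    (φ : ℕ → Fin d → ℝ)
    (hφ : ∀ k, Real.sqrt (∑ i, (φ k i) ^ 2) ≤ C)
    (Λ : ℕ → Matrix (Fin d) (Fin d) ℝ)
    (hΛ : ∀ k, Λ k = lam • (1 : Matrix (Fin d) (Fin d) ℝ) +
        ∑ j ∈ Finset.range k, Matrix.vecMulVec (φ j) (φ j)) :
    ∑ k ∈ Finset.range K, min 1 (φ k ⬝ᵥ ((Λ k)⁻¹ *ᵥ φ k)) ≤
      2 * d * Real.log ((C ^ 2 * K + lam) / lam) :=
  stmt6_general d K lam C hlam φ hφ Λ hΛ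
end
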